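/- arXiv:1306.5556 — 2 statements merged into one kernel-verified Lean document; each statement's English description precedes it below -/
import Mathlib

section
/- Under the general setup, suppose condition (I⁰_ρ) holds for some ρ > 0. Then for every (u,v) in the boundary of V_ρ relative to K (in particular for every (u,v) ∈ K with min_{t∈[a₁,b₁]} u(t) ≤ ρ, min_{t∈[a₂,b₂]} v(t) ≤ ρ and at least one of these minima equal to ρ) and every real μ ≥ 0, one has (u,v) ≠ T(u,v) + μ·(e,e), where e denotes the constant function 1 on [0,1]. (This is the key property from which the paper deduces that the fixed point index of T on V_ρ equals 0.) -/
open MeasureTheory Set Filter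

noncomputable section

/-- The sup norm `‖w‖∞ = sup {|w(t)| : t ∈ [0,1]}`. -/
def supN (w : ℝ → ℝ) : ℝ := sSup ((fun t => |w t|) '' Icc (0:ℝ) 1)

/-- The minimum `min {w(t) : t ∈ [a,b]}`. -/
def minOnIcc (w : ℝ → ℝ) (a b : ℝ) : ℝ := sInf (w '' Icc a b)

/-- The general setup of Infante–Pietramala, "Multiple positive solutions of systems with
coupled nonlinear BCs".  Indices `i, j ∈ {1,2}` of the paper correspond to `0, 1 : Fin 2`. -/
structure Setup where
  f : Fin 2 → ℝ → ℝ → ℝ → ℝ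
  k : Fin 2 → ℝ → ℝ → ℝ
  g : Fin 2 → ℝ → ℝ
  a : Fin 2 → ℝ
  b : Fin 2 → ℝ
  Φ : Fin 2 → ℝ → ℝ
  c : Fin 2 → ℝ
  B : Fin 2 → Fin 2 → Measure ℝ
  C : Fin 2 → Fin 2 → Measure ℝ
  H : Fin 2 → Fin 2 → ℝ → ℝ
  L : Fin 2 → Fin 2 → ℝ → ℝ
  h1 : Fin 2 → Fin 2 → ℝ
  h2 : Fin 2 → Fin 2 → ℝ
  l2 : Fin 2 → Fin 2 → ℝ
  γ : Fin 2 → Fin 2 → ℝ → ℝ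
  cγ : Fin 2 → Fin 2 → ℝ
  -- the nonlinearities fᵢ : [0,1] × [0,∞)² → [0,∞) satisfy Carathéodory conditions
  f_nonneg : ∀ i, ∀ t ∈ Icc (0:ℝ) 1, ∀ u, 0 ≤ u → ∀ v, 0 ≤ v → 0 ≤ f i t u v
  f_meas : ∀ i u v, Measurable fun t => f i t u v
  f_cont : ∀ i, ∀ᵐ t ∂(volume.restrict (Icc (0:ℝ) 1)),
      ContinuousOn (fun p : ℝ × ℝ => f i t p.1 p.2) (Ici 0 ×ˢ Ici 0)
  f_bdd : ∀ i, ∀ r > (0:ℝ), ∃ φ : ℝ → ℝ, MemLp φ ⊤ (volume.restrict (Icc (0:ℝ) 1)) ∧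
      ∀ᵐ t ∂(volume.restrict (Icc (0:ℝ) 1)), ∀ u ∈ Icc (0:ℝ) r, ∀ v ∈ Icc (0:ℝ) r,
        f i t u v ≤ φ t
  -- the kernels
  k_nonneg : ∀ i, ∀ t ∈ Icc (0:ℝ) 1, ∀ s ∈ Icc (0:ℝ) 1, 0 ≤ k i t s
  k_meas : ∀ i, Measurable (Function.uncurry (k i))
  k_cont : ∀ i, ∀ τ ∈ Icc (0:ℝ) 1, ∀ᵐ s ∂(volume.restrict (Icc (0:ℝ) 1)),
      Tendsto (fun t => |k i t s - k i τ s|) (nhds τ) (nhds 0)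
  -- the subintervals [aᵢ,bᵢ] ⊆ [0,1], the functions Φᵢ and the constants cᵢ ∈ (0,1]
  ab_mem : ∀ i, 0 ≤ a i ∧ a i ≤ b i ∧ b i ≤ 1
  Φ_mem : ∀ i, MemLp (Φ i) ⊤ (volume.restrict (Icc (0:ℝ) 1))
  c_mem : ∀ i, c i ∈ Ioc (0:ℝ) 1
  k_le : ∀ i, ∀ t ∈ Icc (0:ℝ) 1, ∀ᵐ s ∂(volume.restrict (Icc (0:ℝ) 1)), k i t s ≤ Φ i s
  k_ge : ∀ i, ∀ t ∈ Icc (a i) (b i), ∀ᵐ s ∂(volume.restrict (Icc (0:ℝ) 1)),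
      c i * Φ i s ≤ k i t s
  -- the weights gᵢ
  g_meas : ∀ i, Measurable (g i)
  g_nonneg : ∀ i, ∀ᵐ s ∂(volume.restrict (Icc (0:ℝ) 1)), 0 ≤ g i s
  gΦ_int : ∀ i, IntegrableOn (fun s => g i s * Φ i s) (Icc (0:ℝ) 1)
  gΦ_pos : ∀ i, 0 < ∫ s in Icc (a i) (b i), Φ i s * g i s
  -- the Stieltjes measures defining the functionals β and δ
  B_fin : ∀ i j, IsFiniteMeasure (B i j)
  C_fin : ∀ i j, IsFiniteMeasure (C i j)
  B_supp : ∀ i j, B i j (Icc (0:ℝ) 1)ᶜ = 0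
  C_supp : ∀ i j, C i j (Icc (0:ℝ) 1)ᶜ = 0
  -- the nonlinear boundary functions H, L with their linear bounds
  H_cont : ∀ i j, ContinuousOn (H i j) (Ici 0)
  L_cont : ∀ i j, ContinuousOn (L i j) (Ici 0)
  H_nonneg : ∀ i j w, 0 ≤ w → 0 ≤ H i j w
  L_nonneg : ∀ i j w, 0 ≤ w → 0 ≤ L i j w
  h1_nonneg : ∀ i j, 0 ≤ h1 i j
  h2_nonneg : ∀ i j, 0 ≤ h2 i j
  l2_nonneg : ∀ i j, 0 ≤ l2 i j
  H_bound_lower : ∀ i j w, 0 ≤ w → h1 i j * w ≤ H i j w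
  H_bound_upper : ∀ i j w, 0 ≤ w → H i j w ≤ h2 i j * w
  L_bound : ∀ i j w, 0 ≤ w → L i j w ≤ l2 i j * w
  -- the functions γᵢⱼ
  γ_cont : ∀ i j, ContinuousOn (γ i j) (Icc (0:ℝ) 1)
  γ_nonneg : ∀ i j, ∀ t ∈ Icc (0:ℝ) 1, 0 ≤ γ i j t
  hβγ : ∀ i j, h2 i j * ∫ s, γ i j s ∂(B i j) < 1
  cγ_mem : ∀ i j, cγ i j ∈ Ioc (0:ℝ) 1
  γ_ge : ∀ i j, ∀ t ∈ Icc (a i) (b i), cγ i j * supN (γ i j) ≤ γ i j t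
  -- positivity of the determinants Dᵢ
  D_pos : ∀ i,
      0 < (1 - h2 i 0 * ∫ s, γ i 0 s ∂(B i 0)) * (1 - h2 i 1 * ∫ s, γ i 1 s ∂(B i 1))
        - h2 i 0 * h2 i 1 * (∫ s, γ i 1 s ∂(B i 0)) * (∫ s, γ i 0 s ∂(B i 1))

namespace Setup

variable (S : Setup)

/-- The functionals `β_{ij}[w] = ∫₀¹ w dB_{ij}`. -/
def β (i j : Fin 2) (w : ℝ → ℝ) : ℝ := ∫ s, w s ∂(S.B i j)

/-- The functionals `δ_{ij}[w] = ∫₀¹ w dC_{ij}`. -/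
def δ (i j : Fin 2) (w : ℝ → ℝ) : ℝ := ∫ s, w s ∂(S.C i j)

/-- The Hammerstein integral operators `Fᵢ`. -/
def F (i : Fin 2) (u v : ℝ → ℝ) (t : ℝ) : ℝ :=
  ∫ s in Icc (0:ℝ) 1, S.k i t s * S.g i s * S.f i s (u s) (v s)

/-- First component of the operator `T`. -/
def T1 (u v : ℝ → ℝ) (t : ℝ) : ℝ :=
  S.γ 0 0 t * (S.H 0 0 (S.β 0 0 u) + S.L 0 0 (S.δ 0 0 v))
    + S.γ 0 1 t * (S.H 0 1 (S.β 0 1 u) + S.L 0 1 (S.δ 0 1 v))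
    + S.F 0 u v t

/-- Second component of the operator `T`. -/
def T2 (u v : ℝ → ℝ) (t : ℝ) : ℝ :=
  S.γ 1 0 t * (S.L 1 0 (S.δ 1 0 u) + S.H 1 0 (S.β 1 0 v))
    + S.γ 1 1 t * (S.L 1 1 (S.δ 1 1 u) + S.H 1 1 (S.β 1 1 v))
    + S.F 1 u v t

/-- The constants `c̃ᵢ = min{cᵢ, c_{i1}, c_{i2}}`. -/
def ctilde (i : Fin 2) : ℝ := min (S.c i) (min (S.cγ i 0) (S.cγ i 1))

/-- The constant `c = min{c̃₁, c̃₂}`. -/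
def cc : ℝ := min (S.ctilde 0) (S.ctilde 1)

/-- Membership of `(u,v)` in the cone `K = K̃₁ × K̃₂`. -/
def inK (u v : ℝ → ℝ) : Prop :=
  ContinuousOn u (Icc (0:ℝ) 1) ∧ ContinuousOn v (Icc (0:ℝ) 1) ∧
  (∀ t ∈ Icc (0:ℝ) 1, 0 ≤ u t) ∧ (∀ t ∈ Icc (0:ℝ) 1, 0 ≤ v t) ∧
  S.ctilde 0 * supN u ≤ minOnIcc u (S.a 0) (S.b 0) ∧
  S.ctilde 1 * supN v ≤ minOnIcc v (S.a 1) (S.b 1)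

/-- `𝒦_{ij}(s) = ∫₀¹ kᵢ(t,s) dB_{ij}(t)`. -/
def KK (i j : Fin 2) (s : ℝ) : ℝ := ∫ t, S.k i t s ∂(S.B i j)

/-- `Qᵢ = Σ_l β_{i1}[γ_{il}] l_{il2} δ_{il}[1]`. -/
def Q (i : Fin 2) : ℝ := ∑ l, S.β i 0 (S.γ i l) * S.l2 i l * S.δ i l (fun _ => 1)

/-- `Sᵢ = Σ_l β_{i2}[γ_{il}] l_{il2} δ_{il}[1]`. -/
def Sq (i : Fin 2) : ℝ := ∑ l, S.β i 1 (S.γ i l) * S.l2 i l * S.δ i l (fun _ => 1)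

/-- The determinant `Dᵢ`. -/
def D (i : Fin 2) : ℝ :=
  (1 - S.h2 i 0 * S.β i 0 (S.γ i 0)) * (1 - S.h2 i 1 * S.β i 1 (S.γ i 1))
    - S.h2 i 0 * S.h2 i 1 * S.β i 0 (S.γ i 1) * S.β i 1 (S.γ i 0)

/-- The determinant `𝐷̲ᵢ` (with the lower constants `h_{ij1}`). -/
def Dl (i : Fin 2) : ℝ :=
  (1 - S.h1 i 0 * S.β i 0 (S.γ i 0)) * (1 - S.h1 i 1 * S.β i 1 (S.γ i 1))
    - S.h1 i 0 * S.h1 i 1 * S.β i 0 (S.γ i 1) * S.β i 1 (S.γ i 0)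

def θ1 (i : Fin 2) : ℝ := (1 - S.h2 i 1 * S.β i 1 (S.γ i 1)) / S.D i
def θ2 (i : Fin 2) : ℝ := S.h2 i 1 * S.β i 0 (S.γ i 1) / S.D i
def θ3 (i : Fin 2) : ℝ := S.h2 i 0 * S.β i 1 (S.γ i 0) / S.D i
def θ4 (i : Fin 2) : ℝ := (1 - S.h2 i 0 * S.β i 0 (S.γ i 0)) / S.D i

/-- `1/mᵢ = sup_{t ∈ [0,1]} ∫₀¹ kᵢ(t,s)gᵢ(s) ds`. -/
def mInv (i : Fin 2) : ℝ :=
  sSup ((fun t => ∫ s in Icc (0:ℝ) 1, S.k i t s * S.g i s) '' Icc (0:ℝ) 1)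

/-- `1/Mᵢ = inf_{t ∈ [aᵢ,bᵢ]} ∫_{aᵢ}^{bᵢ} kᵢ(t,s)gᵢ(s) ds`. -/
def MInv (i : Fin 2) : ℝ :=
  sInf ((fun t => ∫ s in Icc (S.a i) (S.b i), S.k i t s * S.g i s) '' Icc (S.a i) (S.b i))

/-- `fᵢ^{0,ρ} = sup{fᵢ(t,u,v)/ρ : t ∈ [0,1], u,v ∈ [0,ρ]}`. -/
def fSup (i : Fin 2) (ρ : ℝ) : ℝ :=
  sSup {x | ∃ t ∈ Icc (0:ℝ) 1, ∃ u ∈ Icc (0:ℝ) ρ, ∃ v ∈ Icc (0:ℝ) ρ, x = S.f i t u v / ρ}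

/-- `f_{1,(ρ,ρ/c)}`. -/
def fInf1 (ρ : ℝ) : ℝ :=
  sInf {x | ∃ t ∈ Icc (S.a 0) (S.b 0), ∃ u ∈ Icc ρ (ρ / S.cc), ∃ v ∈ Icc (0:ℝ) (ρ / S.cc),
    x = S.f 0 t u v / ρ}

/-- `f_{2,(ρ,ρ/c)}`. -/
def fInf2 (ρ : ℝ) : ℝ :=
  sInf {x | ∃ t ∈ Icc (S.a 1) (S.b 1), ∃ u ∈ Icc (0:ℝ) (ρ / S.cc), ∃ v ∈ Icc ρ (ρ / S.cc),
    x = S.f 1 t u v / ρ}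

def fInf (i : Fin 2) (ρ : ℝ) : ℝ := if i = 0 then S.fInf1 ρ else S.fInf2 ρ

/-- `f*_{i,(0,ρ/c)}`. -/
def fInfStar (i : Fin 2) (ρ : ℝ) : ℝ :=
  sInf {x | ∃ t ∈ Icc (S.a i) (S.b i), ∃ u ∈ Icc (0:ℝ) (ρ / S.cc),
    ∃ v ∈ Icc (0:ℝ) (ρ / S.cc), x = S.f i t u v / ρ}

/-- Condition `(I¹_ρ)`. -/
def CondI1 (ρ : ℝ) : Prop := ∀ i : Fin 2,
  S.fSup i ρ *
      ((supN (S.γ i 0) * S.h2 i 0 * S.θ1 i + supN (S.γ i 1) * S.h2 i 1 * S.θ3 i)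
          * (∫ s in Icc (0:ℝ) 1, S.KK i 0 s * S.g i s)
        + (supN (S.γ i 0) * S.h2 i 0 * S.θ2 i + supN (S.γ i 1) * S.h2 i 1 * S.θ4 i)
          * (∫ s in Icc (0:ℝ) 1, S.KK i 1 s * S.g i s)
        + S.mInv i)
    + supN (S.γ i 0) * S.h2 i 0 * (S.θ1 i * S.Q i + S.θ2 i * S.Sq i)
    + supN (S.γ i 1) * S.h2 i 1 * (S.θ3 i * S.Q i + S.θ4 i * S.Sq i)
    + (∑ j, supN (S.γ i j) * S.l2 i j * S.δ i j fun _ => 1) < 1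

/-- The bracket appearing in conditions `(I⁰_ρ)` and `(I⁰_ρ)*`. -/
def Ψ (i : Fin 2) : ℝ :=
  (S.cγ i 0 * supN (S.γ i 0) * S.h1 i 0 / S.Dl i * (1 - S.h1 i 1 * S.β i 1 (S.γ i 1))
      + S.cγ i 1 * supN (S.γ i 1) * S.h1 i 1 / S.Dl i * (S.h1 i 0 * S.β i 1 (S.γ i 0)))
    * (∫ s in Icc (S.a i) (S.b i), S.KK i 0 s * S.g i s)
  + (S.cγ i 0 * supN (S.γ i 0) * S.h1 i 0 / S.Dl i * (S.h1 i 1 * S.β i 0 (S.γ i 1))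
      + S.cγ i 1 * supN (S.γ i 1) * S.h1 i 1 / S.Dl i * (1 - S.h1 i 0 * S.β i 0 (S.γ i 0)))
    * (∫ s in Icc (S.a i) (S.b i), S.KK i 1 s * S.g i s)
  + S.MInv i

/-- Condition `(I⁰_ρ)`. -/
def CondI0 (ρ : ℝ) : Prop := ∀ i : Fin 2, 1 < S.fInf i ρ * S.Ψ i

/-- Condition `(I⁰_ρ)*`. -/
def CondI0Star (ρ : ℝ) : Prop := ∃ i : Fin 2, 1 < S.fInfStar i ρ * S.Ψ i

/-- `(u,v)` is a fixed point of `T` (as functions on `[0,1]`). -/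
def IsFixedPt (u v : ℝ → ℝ) : Prop :=
  ∀ t ∈ Icc (0:ℝ) 1, S.T1 u v t = u t ∧ S.T2 u v t = v t

/-- `(u,v)` is a positive solution: a fixed point of `T` in `K` with `‖(u,v)‖ > 0`. -/
def PosSol (u v : ℝ → ℝ) : Prop :=
  S.inK u v ∧ S.IsFixedPt u v ∧ 0 < max (supN u) (supN v)

/-- Two pairs are distinct as elements of `C[0,1] × C[0,1]`. -/
def Distinct (u₁ v₁ u₂ v₂ : ℝ → ℝ) : Prop :=
  ∃ t ∈ Icc (0:ℝ) 1, u₁ t ≠ u₂ t ∨ v₁ t ≠ v₂ t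

end Setup

/-!
Suppose `u = T₁(u,v) + μ` on `[0,1]` with `min_{[a₁,b₁]} u = ρ` (the case of `v` is symmetric).
The cone inequalities give `0 ≤ u, v ≤ ρ/c`, so `f₁(s, u(s), v(s)) ≥ ρ f_{1,(ρ,ρ/c)}` on `[a₁,b₁]`.
Applying `β_{11}`, `β_{12}` to the equation (Fubini turns `β_{1j}[F₁]` into an integral against
`𝒦_{1j}`) and using `H_{1l}(w) ≥ h_{1l1} w`, the coefficients
`A_l = H_{1l}(β_{1l}[u]) + L_{1l}(δ_{1l}[v])` satisfy a `2 × 2` system of inequalities whose matrix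
is inverse-positive since `𝐷̲₁ > 0`, and Cramer's rule bounds them from below. Evaluating the
equation on `[a₁,b₁]` with `γ_{1l} ≥ c_{1l}‖γ_{1l}‖` then gives
`min_{[a₁,b₁]} u ≥ ρ f_{1,(ρ,ρ/c)} · [bracket of (I⁰_ρ)] > ρ`, a contradiction.
-/

open Function TopologicalSpace

section Caratheodory

variable {α X : Type*} [MeasurableSpace α] [MeasurableSpace X] [MeasurableSingletonClass X]

theorem measurable_comp_simpleFunc {γ : Type*} [MeasurableSpace γ] {f : α → X → γ}
    (hf : ∀ p, Measurable fun t => f t p) (φ : SimpleFunc α X) : Measurable fun t => f t (φ t) :=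
  (measurable_from_prod_countable_left (f := fun p : α × φ.range => f p.1 p.2) fun p => hf p).comp
    (measurable_id.prodMk (φ.measurable.subtype_mk (h := φ.mem_range_self)))

theorem aestronglyMeasurable_comp_of_continuousOn [PseudoMetricSpace X] [OpensMeasurableSpace X]
    {μ : Measure α} {f : α → X → ℝ} {ψ : α → X}
    {Q : Set X} [SeparableSpace Q] (hψ : Measurable ψ) (hψQ : ∀ t, ψ t ∈ Q)
    (hf : ∀ p, Measurable fun t => f t p) (hfQ : ∀ᵐ t ∂μ, ContinuousOn (f t) Q) :
    AEStronglyMeasurable (fun t => f t (ψ t)) μ := by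
  rcases isEmpty_or_nonempty α with hα | ⟨⟨t₀⟩⟩
  · exact .of_subsingleton_dom
  let ψₙ := SimpleFunc.approxOn ψ hψ Q (ψ t₀) (hψQ t₀)
  refine aestronglyMeasurable_of_tendsto_ae atTop
    (fun n => (measurable_comp_simpleFunc hf (ψₙ n)).aestronglyMeasurable) ?_
  filter_upwards [hfQ] with t ht
  refine (ht _ (hψQ t)).tendsto.comp (tendsto_nhdsWithin_iff.2 ⟨?_, .of_forall fun n => ?_⟩)
  · exact SimpleFunc.tendsto_approxOn hψ (hψQ t₀) (subset_closure (hψQ t))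
  · exact SimpleFunc.approxOn_mem hψ (hψQ t₀) n t

end Caratheodory

section KernelIntegrals

variable {α β : Type*} [MeasurableSpace α] [MeasurableSpace β] {ν : Measure α} {μ : Measure β}
  {Φ h : β → ℝ}

theorem integrable_mul_of_nonneg_of_le {K : β → ℝ} (hK : AEStronglyMeasurable K μ)
    (hh : AEStronglyMeasurable h μ) (hKΦ : ∀ᵐ s ∂μ, 0 ≤ K s ∧ K s ≤ Φ s)
    (hh0 : ∀ᵐ s ∂μ, 0 ≤ h s) (hΦh : Integrable (fun s => Φ s * h s) μ) :
    Integrable (fun s => K s * h s) μ := by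
  refine hΦh.mono' (hK.mul hh) ?_
  filter_upwards [hKΦ, hh0] with s ⟨hK0, hKΦ⟩ hh0
  rw [Real.norm_eq_abs, abs_of_nonneg (mul_nonneg hK0 hh0)]
  exact mul_le_mul_of_nonneg_right hKΦ hh0

theorem integrable_prod_mul_of_nonneg_of_le [IsFiniteMeasure ν] [SFinite μ] {k : α → β → ℝ}
    (hk : AEStronglyMeasurable (uncurry k) (ν.prod μ)) (hh : AEStronglyMeasurable h μ)
    (hkΦ : ∀ᵐ t ∂ν, ∀ᵐ s ∂μ, 0 ≤ k t s ∧ k t s ≤ Φ s) (hh0 : ∀ᵐ s ∂μ, 0 ≤ h s)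
    (hΦh : Integrable (fun s => Φ s * h s) μ) :
    Integrable (uncurry fun t s => k t s * h s) (ν.prod μ) := by
  have hkh : AEStronglyMeasurable (uncurry fun t s => k t s * h s) (ν.prod μ) :=
    hk.mul hh.comp_snd
  refine (integrable_prod_iff hkh).2 ⟨?_, ?_⟩
  · filter_upwards [hk.prodMk_left, hkΦ] with t hkt hkΦt
    exact integrable_mul_of_nonneg_of_le hkt hh hkΦt hh0 hΦh
  · refine (integrable_const (∫ s, Φ s * h s ∂μ)).mono' hkh.norm.integral_prod_right' ?_
    filter_upwards [hkΦ] with t hkΦt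
    rw [Real.norm_eq_abs, abs_of_nonneg (integral_nonneg fun _ => norm_nonneg _)]
    refine integral_mono_of_nonneg (.of_forall fun _ => norm_nonneg _) hΦh ?_
    filter_upwards [hkΦt, hh0] with s ⟨hk0, hkΦ⟩ hh0
    simp only [uncurry_apply_pair, Real.norm_eq_abs, abs_of_nonneg (mul_nonneg hk0 hh0)]
    exact mul_le_mul_of_nonneg_right hkΦ hh0

theorem mul_setIntegral_le_setIntegral_mul {K : β → ℝ} {I J : Set β} {m : ℝ}
    (hJ : MeasurableSet J) (hJI : J ⊆ I) (hK : IntegrableOn K J μ)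
    (hKh : IntegrableOn (fun s => K s * h s) I μ) (hK0 : ∀ᵐ s ∂μ.restrict I, 0 ≤ K s)
    (hh0 : ∀ᵐ s ∂μ.restrict I, 0 ≤ h s) (hm : ∀ s ∈ J, m ≤ h s) :
    m * ∫ s in J, K s ∂μ ≤ ∫ s in I, K s * h s ∂μ :=
  calc m * ∫ s in J, K s ∂μ = ∫ s in J, K s * m ∂μ := by rw [integral_mul_const, mul_comm]
    _ ≤ ∫ s in J, K s * h s ∂μ := by
      refine setIntegral_mono_ae_restrict (hK.mul_const m) (hKh.mono_set hJI) ?_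
      filter_upwards [ae_restrict_of_ae_restrict_of_subset hJI hK0, ae_restrict_mem hJ]
        with s hK0 hsJ
      exact mul_le_mul_of_nonneg_left (hm s hsJ) hK0
    _ ≤ ∫ s in I, K s * h s ∂μ := by
      refine setIntegral_mono_set hKh ?_ hJI.eventuallyLE
      filter_upwards [hK0, hh0] with s hK0 hh0 using mul_nonneg hK0 hh0

end KernelIntegrals

theorem cramer_le_of_sub_le {m₀₀ m₀₁ m₁₀ m₁₁ p₀ p₁ x₀ x₁ : ℝ} (h₀₁ : 0 ≤ m₀₁) (h₁₀ : 0 ≤ m₁₀)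
    (h₀₀ : 0 ≤ 1 - m₀₀) (h₁₁ : 0 ≤ 1 - m₁₁) (hD : 0 < (1 - m₀₀) * (1 - m₁₁) - m₀₁ * m₁₀)
    (hx₀ : m₀₀ * x₀ + m₀₁ * x₁ + p₀ ≤ x₀) (hx₁ : m₁₀ * x₀ + m₁₁ * x₁ + p₁ ≤ x₁) :
    ((1 - m₁₁) * p₀ + m₀₁ * p₁) / ((1 - m₀₀) * (1 - m₁₁) - m₀₁ * m₁₀) ≤ x₀ ∧
      (m₁₀ * p₀ + (1 - m₀₀) * p₁) / ((1 - m₀₀) * (1 - m₁₁) - m₀₁ * m₁₀) ≤ x₁ := by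
  constructor <;> rw [div_le_iff₀ hD]
  · linarith [mul_le_mul_of_nonneg_left hx₀ h₁₁, mul_le_mul_of_nonneg_left hx₁ h₀₁]
  · linarith [mul_le_mul_of_nonneg_left hx₀ h₁₀, mul_le_mul_of_nonneg_left hx₁ h₀₀]

theorem le_supN {w : ℝ → ℝ} (hw : ContinuousOn w (Icc 0 1)) {t : ℝ} (ht : t ∈ Icc (0:ℝ) 1) :
    w t ≤ supN w :=
  (le_abs_self _).trans <|
    le_csSup (isCompact_Icc.image_of_continuousOn hw.abs).bddAbove ⟨t, ht, rfl⟩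

theorem supN_nonneg (w : ℝ → ℝ) : 0 ≤ supN w :=
  Real.sSup_nonneg <| by rintro x ⟨t, -, rfl⟩; exact abs_nonneg _

theorem minOnIcc_le {w : ℝ → ℝ} {a b : ℝ} (hw : ContinuousOn w (Icc a b)) {t : ℝ}
    (ht : t ∈ Icc a b) : minOnIcc w a b ≤ w t :=
  csInf_le (isCompact_Icc.image_of_continuousOn hw).bddBelow ⟨t, ht, rfl⟩

theorem le_minOnIcc {w : ℝ → ℝ} {a b C : ℝ} (hab : a ≤ b) (h : ∀ t ∈ Icc a b, C ≤ w t) :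
    C ≤ minOnIcc w a b :=
  le_csInf ((nonempty_Icc.2 hab).image w) <| by rintro _ ⟨t, ht, rfl⟩; exact h t ht

namespace Setup

variable (S : Setup)

instance (i j : Fin 2) : IsFiniteMeasure (S.B i j) := S.B_fin i j

theorem a_le_b (i : Fin 2) : S.a i ≤ S.b i := (S.ab_mem i).2.1

theorem Icc_a_b_subset (i : Fin 2) : Icc (S.a i) (S.b i) ⊆ Icc 0 1 :=
  Icc_subset_Icc (S.ab_mem i).1 (S.ab_mem i).2.2

theorem ctilde_pos (i : Fin 2) : 0 < S.ctilde i :=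
  lt_min (S.c_mem i).1 (lt_min (S.cγ_mem i 0).1 (S.cγ_mem i 1).1)

theorem cc_pos : 0 < S.cc := lt_min (S.ctilde_pos 0) (S.ctilde_pos 1)

theorem cc_le_ctilde (i : Fin 2) : S.cc ≤ S.ctilde i := by
  fin_cases i
  exacts [min_le_left _ _, min_le_right _ _]

theorem ae_mem_B (i j : Fin 2) : ∀ᵐ t ∂S.B i j, t ∈ Icc (0:ℝ) 1 := mem_ae_iff.2 (S.B_supp i j)

theorem ae_mem_C (i j : Fin 2) : ∀ᵐ t ∂S.C i j, t ∈ Icc (0:ℝ) 1 := mem_ae_iff.2 (S.C_supp i j)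

theorem integrable_B_of_continuousOn (i j : Fin 2) {w : ℝ → ℝ}
    (hw : ContinuousOn w (Icc 0 1)) : Integrable w (S.B i j) := by
  rw [← Measure.restrict_eq_self_of_ae_mem (S.ae_mem_B i j)]
  exact hw.integrableOn_compact isCompact_Icc

theorem β_nonneg (i j : Fin 2) {w : ℝ → ℝ} (hw : ∀ t ∈ Icc (0:ℝ) 1, 0 ≤ w t) :
    0 ≤ S.β i j w :=
  integral_nonneg_of_ae <| by filter_upwards [S.ae_mem_B i j] with t ht using hw t ht

theorem δ_nonneg (i j : Fin 2) {w : ℝ → ℝ} (hw : ∀ t ∈ Icc (0:ℝ) 1, 0 ≤ w t) :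
    0 ≤ S.δ i j w :=
  integral_nonneg_of_ae <| by filter_upwards [S.ae_mem_C i j] with t ht using hw t ht

theorem h1_mul_le_H_add_L (i j : Fin 2) {x y : ℝ} (hx : 0 ≤ x) (hy : 0 ≤ y) :
    S.h1 i j * x ≤ S.H i j x + S.L i j y :=
  le_add_of_le_of_nonneg (S.H_bound_lower i j x hx) (S.L_nonneg i j y hy)

theorem H_add_L_nonneg (i j : Fin 2) {x y : ℝ} (hx : 0 ≤ x) (hy : 0 ≤ y) :
    0 ≤ S.H i j x + S.L i j y :=
  add_nonneg (S.H_nonneg i j x hx) (S.L_nonneg i j y hy)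

theorem h1_le_h2 (i j : Fin 2) : S.h1 i j ≤ S.h2 i j := by
  simpa using (S.H_bound_lower i j 1 zero_le_one).trans (S.H_bound_upper i j 1 zero_le_one)

theorem h1_mul_βγ_le_h2_mul (i j l : Fin 2) :
    S.h1 i j * S.β i j (S.γ i l) ≤ S.h2 i j * S.β i j (S.γ i l) :=
  mul_le_mul_of_nonneg_right (S.h1_le_h2 i j) (S.β_nonneg i j (S.γ_nonneg i l))

theorem h2_mul_βγ_lt_one (i j : Fin 2) : S.h2 i j * S.β i j (S.γ i j) < 1 := S.hβγ i j

theorem one_sub_h1_mul_βγ_pos (i j : Fin 2) : 0 < 1 - S.h1 i j * S.β i j (S.γ i j) := by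
  linarith [S.h1_mul_βγ_le_h2_mul i j j, S.h2_mul_βγ_lt_one i j]

theorem Dl_pos (i : Fin 2) : 0 < S.Dl i := by
  have hD : 0 < S.D i := S.D_pos i
  have hdiag : (1 - S.h2 i 0 * S.β i 0 (S.γ i 0)) * (1 - S.h2 i 1 * S.β i 1 (S.γ i 1))
      ≤ (1 - S.h1 i 0 * S.β i 0 (S.γ i 0)) * (1 - S.h1 i 1 * S.β i 1 (S.γ i 1)) :=
    mul_le_mul (by linarith [S.h1_mul_βγ_le_h2_mul i 0 0])
      (by linarith [S.h1_mul_βγ_le_h2_mul i 1 1]) (by linarith [S.h2_mul_βγ_lt_one i 1])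
      (S.one_sub_h1_mul_βγ_pos i 0).le
  have hoff : S.h1 i 0 * S.h1 i 1 * S.β i 0 (S.γ i 1) * S.β i 1 (S.γ i 0)
      ≤ S.h2 i 0 * S.h2 i 1 * S.β i 0 (S.γ i 1) * S.β i 1 (S.γ i 0) := by
    have := mul_le_mul (S.h1_mul_βγ_le_h2_mul i 0 1) (S.h1_mul_βγ_le_h2_mul i 1 0)
      (mul_nonneg (S.h1_nonneg i 1) (S.β_nonneg i 1 (S.γ_nonneg i 0)))
      (mul_nonneg (S.h2_nonneg i 0) (S.β_nonneg i 0 (S.γ_nonneg i 1)))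
    linarith
  unfold D at hD
  unfold Dl
  linarith

theorem le_div_cc_of_minOnIcc_le (i : Fin 2) {w : ℝ → ℝ} {ρ : ℝ} (hρ : 0 ≤ ρ)
    (hw : ContinuousOn w (Icc 0 1)) (hK : S.ctilde i * supN w ≤ minOnIcc w (S.a i) (S.b i))
    (hmin : minOnIcc w (S.a i) (S.b i) ≤ ρ) {t : ℝ} (ht : t ∈ Icc (0:ℝ) 1) :
    w t ≤ ρ / S.cc :=
  calc w t ≤ supN w := le_supN hw ht
    _ ≤ ρ / S.ctilde i := (le_div_iff₀' (S.ctilde_pos i)).2 (hK.trans hmin)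
    _ ≤ ρ / S.cc := div_le_div_of_nonneg_left hρ S.cc_pos (S.cc_le_ctilde i)

theorem aestronglyMeasurable_f_comp (i : Fin 2) {u v : ℝ → ℝ} (hu : ContinuousOn u (Icc 0 1))
    (hv : ContinuousOn v (Icc 0 1)) (hu0 : ∀ t ∈ Icc (0:ℝ) 1, 0 ≤ u t)
    (hv0 : ∀ t ∈ Icc (0:ℝ) 1, 0 ≤ v t) :
    AEStronglyMeasurable (fun s => S.f i s (u s) (v s)) (volume.restrict (Icc 0 1)) := by
  -- extend `(u, v)` from `[0,1]` by constants, to get a continuous map into the closed quadrant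
  let π : ℝ → ℝ := fun s => projIcc 0 1 zero_le_one s
  have hπ : ∀ s, π s ∈ Icc (0:ℝ) 1 := fun s => (projIcc 0 1 zero_le_one s).2
  have hψ : Continuous fun s => (u (π s), v (π s)) :=
    (hu.comp_continuous (by fun_prop) hπ).prodMk (hv.comp_continuous (by fun_prop) hπ)
  refine (aestronglyMeasurable_comp_of_continuousOn (f := fun s p => S.f i s p.1 p.2)
    (Q := Ici 0 ×ˢ Ici 0) hψ.measurable (fun s => ⟨hu0 _ (hπ s), hv0 _ (hπ s)⟩)
    (fun p => S.f_meas i p.1 p.2) (S.f_cont i)).congr ?_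
  filter_upwards [ae_restrict_mem measurableSet_Icc] with s hs
  simp only [π, projIcc_of_mem _ hs]

theorem memLp_top_f_comp (i : Fin 2) {u v : ℝ → ℝ} (hu : ContinuousOn u (Icc 0 1))
    (hv : ContinuousOn v (Icc 0 1)) (hu0 : ∀ t ∈ Icc (0:ℝ) 1, 0 ≤ u t)
    (hv0 : ∀ t ∈ Icc (0:ℝ) 1, 0 ≤ v t) {r : ℝ} (hr : 0 < r) (hur : ∀ t ∈ Icc (0:ℝ) 1, u t ≤ r)
    (hvr : ∀ t ∈ Icc (0:ℝ) 1, v t ≤ r) :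
    MemLp (fun s => S.f i s (u s) (v s)) ⊤ (volume.restrict (Icc 0 1)) := by
  obtain ⟨φ, hφ, hfφ⟩ := S.f_bdd i r hr
  refine hφ.mono (S.aestronglyMeasurable_f_comp i hu hv hu0 hv0) ?_
  filter_upwards [hfφ, ae_restrict_mem measurableSet_Icc] with s hs hsI
  have hf0 := S.f_nonneg i s hsI _ (hu0 s hsI) _ (hv0 s hsI)
  have hfφ := hs _ ⟨hu0 s hsI, hur s hsI⟩ _ ⟨hv0 s hsI, hvr s hsI⟩
  rw [Real.norm_eq_abs, Real.norm_eq_abs, abs_of_nonneg hf0, abs_of_nonneg (hf0.trans hfφ)]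
  exact hfφ

theorem ae_f_comp_nonneg (i : Fin 2) {u v : ℝ → ℝ} (hu0 : ∀ t ∈ Icc (0:ℝ) 1, 0 ≤ u t)
    (hv0 : ∀ t ∈ Icc (0:ℝ) 1, 0 ≤ v t) :
    ∀ᵐ s ∂volume.restrict (Icc 0 1), 0 ≤ S.f i s (u s) (v s) := by
  filter_upwards [ae_restrict_mem measurableSet_Icc] with s hs
  exact S.f_nonneg i s hs _ (hu0 s hs) _ (hv0 s hs)

theorem fInf_nonneg (i : Fin 2) {ρ : ℝ} (hρ : 0 ≤ ρ) : 0 ≤ S.fInf i ρ := by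
  unfold fInf fInf1 fInf2
  split_ifs
  all_goals
    refine Real.sInf_nonneg ?_
    rintro _ ⟨t, ht, x, hx, y, hy, rfl⟩
    exact div_nonneg (S.f_nonneg _ t (S.Icc_a_b_subset _ ht) x (by linarith [hx.1])
      y (by linarith [hy.1])) hρ

theorem fInf_fst_mul_le {ρ : ℝ} (hρ : 0 < ρ) {t x y : ℝ} (ht : t ∈ Icc (S.a 0) (S.b 0))
    (hx : x ∈ Icc ρ (ρ / S.cc)) (hy : y ∈ Icc 0 (ρ / S.cc)) : S.fInf 0 ρ * ρ ≤ S.f 0 t x y := by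
  rw [← le_div_iff₀ hρ]
  refine csInf_le ⟨0, ?_⟩ ⟨t, ht, x, hx, y, hy, rfl⟩
  rintro _ ⟨t, ht, x, hx, y, hy, rfl⟩
  exact div_nonneg (S.f_nonneg 0 t (S.Icc_a_b_subset 0 ht) x (hρ.le.trans hx.1) y hy.1) hρ.le

theorem fInf_snd_mul_le {ρ : ℝ} (hρ : 0 < ρ) {t x y : ℝ} (ht : t ∈ Icc (S.a 1) (S.b 1))
    (hx : x ∈ Icc 0 (ρ / S.cc)) (hy : y ∈ Icc ρ (ρ / S.cc)) : S.fInf 1 ρ * ρ ≤ S.f 1 t x y := by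
  rw [← le_div_iff₀ hρ]
  refine csInf_le ⟨0, ?_⟩ ⟨t, ht, x, hx, y, hy, rfl⟩
  rintro _ ⟨t, ht, x, hx, y, hy, rfl⟩
  exact div_nonneg (S.f_nonneg 1 t (S.Icc_a_b_subset 1 ht) x hx.1 y (hρ.le.trans hy.1)) hρ.le

def IsKernelWeight (i : Fin 2) (h : ℝ → ℝ) : Prop :=
  AEStronglyMeasurable h (volume.restrict (Icc 0 1)) ∧
    (∀ᵐ s ∂volume.restrict (Icc 0 1), 0 ≤ h s) ∧
    Integrable (fun s => S.Φ i s * h s) (volume.restrict (Icc 0 1))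

theorem isKernelWeight_g (i : Fin 2) : S.IsKernelWeight i (S.g i) :=
  ⟨(S.g_meas i).aestronglyMeasurable, S.g_nonneg i,
    by simpa only [IntegrableOn, mul_comm] using S.gΦ_int i⟩

variable {S}

theorem IsKernelWeight.mul {i : Fin 2} {h φ : ℝ → ℝ} (hh : S.IsKernelWeight i h)
    (hφ : MemLp φ ⊤ (volume.restrict (Icc 0 1))) (hφ0 : ∀ᵐ s ∂volume.restrict (Icc 0 1), 0 ≤ φ s) :
    S.IsKernelWeight i fun s => h s * φ s := by
  refine ⟨hh.1.mul hφ.1, ?_, ?_⟩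
  · filter_upwards [hh.2.1, hφ0] with s h1 h2 using mul_nonneg h1 h2
  · simpa only [Pi.mul_def, mul_assoc] using hh.2.2.mul_of_top_left hφ

theorem IsKernelWeight.integrableOn_section {i : Fin 2} {h : ℝ → ℝ} (hh : S.IsKernelWeight i h)
    {t : ℝ} (ht : t ∈ Icc (0:ℝ) 1) : IntegrableOn (fun s => S.k i t s * h s) (Icc 0 1) := by
  refine integrable_mul_of_nonneg_of_le
    ((S.k_meas i).comp measurable_prodMk_left).aestronglyMeasurable hh.1 ?_ hh.2.1 hh.2.2
  filter_upwards [S.k_le i t ht, ae_restrict_mem measurableSet_Icc] with s hkΦ hs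
  exact ⟨S.k_nonneg i t ht s hs, hkΦ⟩

theorem IsKernelWeight.integrable_prod {i : Fin 2} {h : ℝ → ℝ} (hh : S.IsKernelWeight i h)
    (j : Fin 2) :
    Integrable (uncurry fun t s => S.k i t s * h s)
      ((S.B i j).prod (volume.restrict (Icc 0 1))) := by
  refine integrable_prod_mul_of_nonneg_of_le (S.k_meas i).aestronglyMeasurable hh.1 ?_ hh.2.1 hh.2.2
  filter_upwards [S.ae_mem_B i j] with t ht
  filter_upwards [S.k_le i t ht, ae_restrict_mem measurableSet_Icc] with s hkΦ hs
  exact ⟨S.k_nonneg i t ht s hs, hkΦ⟩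

theorem IsKernelWeight.integrable_integral {i : Fin 2} {h : ℝ → ℝ} (hh : S.IsKernelWeight i h)
    (j : Fin 2) : Integrable (fun t => ∫ s in Icc 0 1, S.k i t s * h s) (S.B i j) :=
  (hh.integrable_prod j).integral_prod_left

theorem IsKernelWeight.integrableOn_KK_mul {i : Fin 2} {h : ℝ → ℝ} (hh : S.IsKernelWeight i h)
    (j : Fin 2) : IntegrableOn (fun s => S.KK i j s * h s) (Icc 0 1) := by
  simpa only [IntegrableOn, KK, uncurry_apply_pair, ← integral_mul_const] using
    (hh.integrable_prod j).integral_prod_right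

theorem IsKernelWeight.integral_integral_eq {i : Fin 2} {h : ℝ → ℝ} (hh : S.IsKernelWeight i h)
    (j : Fin 2) :
    ∫ t, (∫ s in Icc 0 1, S.k i t s * h s) ∂S.B i j = ∫ s in Icc 0 1, S.KK i j s * h s := by
  simp only [integral_integral_swap (hh.integrable_prod j), KK, integral_mul_const]

variable (S)

theorem KK_nonneg (i j : Fin 2) {s : ℝ} (hs : s ∈ Icc (0:ℝ) 1) : 0 ≤ S.KK i j s :=
  integral_nonneg_of_ae <| by
    filter_upwards [S.ae_mem_B i j] with t ht using S.k_nonneg i t ht s hs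

theorem MInv_le (i : Fin 2) {t : ℝ} (ht : t ∈ Icc (S.a i) (S.b i)) :
    S.MInv i ≤ ∫ s in Icc (S.a i) (S.b i), S.k i t s * S.g i s := by
  refine csInf_le ⟨0, ?_⟩ ⟨t, ht, rfl⟩
  rintro _ ⟨t, ht, rfl⟩
  refine integral_nonneg_of_ae ?_
  filter_upwards [ae_restrict_of_ae_restrict_of_subset (S.Icc_a_b_subset i) (S.g_nonneg i),
    ae_restrict_mem measurableSet_Icc] with s hs hsab
  exact mul_nonneg (S.k_nonneg i t (S.Icc_a_b_subset i ht) s (S.Icc_a_b_subset i hsab)) hs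

section Estimates

variable {i : Fin 2} {φ : ℝ → ℝ} (hφ : MemLp φ ⊤ (volume.restrict (Icc 0 1)))
  (hφ0 : ∀ᵐ s ∂volume.restrict (Icc 0 1), 0 ≤ φ s)
include hφ hφ0

theorem mul_MInv_le_integral {m : ℝ} (hm0 : 0 ≤ m) (hm : ∀ s ∈ Icc (S.a i) (S.b i), m ≤ φ s)
    {t : ℝ} (ht : t ∈ Icc (S.a i) (S.b i)) :
    m * S.MInv i ≤ ∫ s in Icc 0 1, S.k i t s * S.g i s * φ s := by
  have htI := S.Icc_a_b_subset i ht
  refine (mul_le_mul_of_nonneg_left (S.MInv_le i ht) hm0).trans <|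
    mul_setIntegral_le_setIntegral_mul measurableSet_Icc (S.Icc_a_b_subset i)
      (((S.isKernelWeight_g i).integrableOn_section htI).mono_set (S.Icc_a_b_subset i))
      (by simpa only [mul_assoc] using ((S.isKernelWeight_g i).mul hφ hφ0).integrableOn_section htI)
      ?_ hφ0 hm
  filter_upwards [S.g_nonneg i, ae_restrict_mem measurableSet_Icc] with s hg hs
  exact mul_nonneg (S.k_nonneg i t htI s hs) hg

theorem mul_integral_KK_le (j : Fin 2) {m : ℝ} (hm : ∀ s ∈ Icc (S.a i) (S.b i), m ≤ φ s) :
    m * ∫ s in Icc (S.a i) (S.b i), S.KK i j s * S.g i s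
      ≤ ∫ t, (∫ s in Icc 0 1, S.k i t s * S.g i s * φ s) ∂S.B i j := by
  have hgφ := (S.isKernelWeight_g i).mul hφ hφ0
  have hF := hgφ.integral_integral_eq j
  simp only [← mul_assoc] at hF
  rw [hF]
  refine mul_setIntegral_le_setIntegral_mul measurableSet_Icc (S.Icc_a_b_subset i)
    (((S.isKernelWeight_g i).integrableOn_KK_mul j).mono_set (S.Icc_a_b_subset i))
    (by simpa only [mul_assoc] using hgφ.integrableOn_KK_mul j) ?_ hφ0 hm
  filter_upwards [S.g_nonneg i, ae_restrict_mem measurableSet_Icc] with s hg hs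
  exact mul_nonneg (S.KK_nonneg i j hs) hg

theorem add_integral_le_β_of_eq (j : Fin 2) {w : ℝ → ℝ} {A₀ A₁ μ : ℝ} (hμ : 0 ≤ μ)
    (hw : ∀ t ∈ Icc (0:ℝ) 1,
      w t = S.γ i 0 t * A₀ + S.γ i 1 t * A₁ + (∫ s in Icc 0 1, S.k i t s * S.g i s * φ s) + μ) :
    S.β i j (S.γ i 0) * A₀ + S.β i j (S.γ i 1) * A₁
      + ∫ t, (∫ s in Icc 0 1, S.k i t s * S.g i s * φ s) ∂S.B i j ≤ S.β i j w := by
  have hF : Integrable (fun t => ∫ s in Icc 0 1, S.k i t s * S.g i s * φ s) (S.B i j) := by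
    simpa only [mul_assoc] using ((S.isKernelWeight_g i).mul hφ hφ0).integrable_integral j
  have hγ₀ := (S.integrable_B_of_continuousOn i j (S.γ_cont i 0)).mul_const A₀
  have hγ₁ := (S.integrable_B_of_continuousOn i j (S.γ_cont i 1)).mul_const A₁
  have hβw : S.β i j w = S.β i j (S.γ i 0) * A₀ + S.β i j (S.γ i 1) * A₁
      + (∫ t, (∫ s in Icc 0 1, S.k i t s * S.g i s * φ s) ∂S.B i j) + μ * (S.B i j).real univ := by
    rw [β, integral_congr_ae ((S.ae_mem_B i j).mono hw), integral_add ((hγ₀.fun_add hγ₁).fun_add hF)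
      (integrable_const μ), integral_add (hγ₀.fun_add hγ₁) hF, integral_add hγ₀ hγ₁,
      integral_mul_const, integral_mul_const, integral_const, smul_eq_mul, mul_comm μ]
    rfl
  rw [hβw]
  exact le_add_of_nonneg_right (mul_nonneg hμ measureReal_nonneg)

theorem mul_Ψ_le_minOnIcc {w : ℝ → ℝ} {A₀ A₁ μ m : ℝ} (hμ : 0 ≤ μ) (hm0 : 0 ≤ m)
    (hm : ∀ s ∈ Icc (S.a i) (S.b i), m ≤ φ s) (hA₀ : S.h1 i 0 * S.β i 0 w ≤ A₀)
    (hA₁ : S.h1 i 1 * S.β i 1 w ≤ A₁) (hA₀0 : 0 ≤ A₀) (hA₁0 : 0 ≤ A₁)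
    (hw : ∀ t ∈ Icc (0:ℝ) 1,
      w t = S.γ i 0 t * A₀ + S.γ i 1 t * A₁ + (∫ s in Icc 0 1, S.k i t s * S.g i s * φ s) + μ) :
    m * S.Ψ i ≤ minOnIcc w (S.a i) (S.b i) := by
  set P : Fin 2 → ℝ := fun j => m * ∫ s in Icc (S.a i) (S.b i), S.KK i j s * S.g i s
  have hβ (j : Fin 2) :
      S.β i j (S.γ i 0) * A₀ + S.β i j (S.γ i 1) * A₁ + P j ≤ S.β i j w :=
    (add_le_add_right (S.mul_integral_KK_le hφ hφ0 j hm) _).trans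
      (S.add_integral_le_β_of_eq hφ hφ0 j hμ hw)
  -- `Aⱼ ≥ h₁ⱼ β_j[w] ≥ h₁ⱼ (β_j[γ₀] A₀ + β_j[γ₁] A₁ + Pⱼ)`: an inverse-positive
  -- `2 × 2` system for `(A₀, A₁)`, with determinant `𝐷̲ᵢ`
  have hD : (1 - S.h1 i 0 * S.β i 0 (S.γ i 0)) * (1 - S.h1 i 1 * S.β i 1 (S.γ i 1))
      - S.h1 i 0 * S.β i 0 (S.γ i 1) * (S.h1 i 1 * S.β i 1 (S.γ i 0)) = S.Dl i := by
    unfold Dl; ring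
  obtain ⟨hA₀', hA₁'⟩ := cramer_le_of_sub_le (x₀ := A₀) (x₁ := A₁)
    (p₀ := S.h1 i 0 * P 0) (p₁ := S.h1 i 1 * P 1)
    (mul_nonneg (S.h1_nonneg i 0) (S.β_nonneg i 0 (S.γ_nonneg i 1)))
    (mul_nonneg (S.h1_nonneg i 1) (S.β_nonneg i 1 (S.γ_nonneg i 0)))
    (S.one_sub_h1_mul_βγ_pos i 0).le (S.one_sub_h1_mul_βγ_pos i 1).le (hD ▸ S.Dl_pos i)
    (by linarith [mul_le_mul_of_nonneg_left (hβ 0) (S.h1_nonneg i 0)])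
    (by linarith [mul_le_mul_of_nonneg_left (hβ 1) (S.h1_nonneg i 1)])
  rw [hD] at hA₀' hA₁'
  have hpt : ∀ t ∈ Icc (S.a i) (S.b i),
      S.cγ i 0 * supN (S.γ i 0) * A₀ + S.cγ i 1 * supN (S.γ i 1) * A₁ + m * S.MInv i ≤ w t := by
    intro t ht
    rw [hw t (S.Icc_a_b_subset i ht)]
    linarith [S.mul_MInv_le_integral hφ hφ0 hm0 hm ht,
      mul_le_mul_of_nonneg_right (S.γ_ge i 0 t ht) hA₀0,
      mul_le_mul_of_nonneg_right (S.γ_ge i 1 t ht) hA₁0]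
  have hc (l : Fin 2) : 0 ≤ S.cγ i l * supN (S.γ i l) :=
    mul_nonneg (S.cγ_mem i l).1.le (supN_nonneg _)
  refine le_minOnIcc (S.a_le_b i) fun t ht => le_trans ?_ (hpt t ht)
  calc m * S.Ψ i
      = S.cγ i 0 * supN (S.γ i 0) * (((1 - S.h1 i 1 * S.β i 1 (S.γ i 1)) * (S.h1 i 0 * P 0)
            + S.h1 i 0 * S.β i 0 (S.γ i 1) * (S.h1 i 1 * P 1)) / S.Dl i)
        + S.cγ i 1 * supN (S.γ i 1) * ((S.h1 i 1 * S.β i 1 (S.γ i 0) * (S.h1 i 0 * P 0)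
            + (1 - S.h1 i 0 * S.β i 0 (S.γ i 0)) * (S.h1 i 1 * P 1)) / S.Dl i)
        + m * S.MInv i := by
          simp only [Setup.Ψ]
          ring
    _ ≤ S.cγ i 0 * supN (S.γ i 0) * A₀ + S.cγ i 1 * supN (S.γ i 1) * A₁ + m * S.MInv i :=
      add_le_add (add_le_add (mul_le_mul_of_nonneg_left hA₀' (hc 0))
        (mul_le_mul_of_nonneg_left hA₁' (hc 1))) le_rfl

end Estimates

section Components

variable {ρ μ : ℝ} {u v : ℝ → ℝ} (hρ : 0 < ρ) (hμ : 0 ≤ μ) (hu : ContinuousOn u (Icc 0 1))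
  (hv : ContinuousOn v (Icc 0 1)) (hu0 : ∀ t ∈ Icc (0:ℝ) 1, 0 ≤ u t)
  (hv0 : ∀ t ∈ Icc (0:ℝ) 1, 0 ≤ v t) (hub : ∀ t ∈ Icc (0:ℝ) 1, u t ≤ ρ / S.cc)
  (hvb : ∀ t ∈ Icc (0:ℝ) 1, v t ≤ ρ / S.cc)
include hρ hμ hu hv hu0 hv0 hub hvb

theorem fInf_mul_Ψ_le_minOnIcc_fst (hρu : ρ ≤ minOnIcc u (S.a 0) (S.b 0))
    (heq : ∀ t ∈ Icc (0:ℝ) 1, u t = S.T1 u v t + μ) :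
    S.fInf 0 ρ * ρ * S.Ψ 0 ≤ minOnIcc u (S.a 0) (S.b 0) := by
  have hβ (j : Fin 2) := S.β_nonneg 0 j hu0
  have hδ (j : Fin 2) := S.δ_nonneg 0 j hv0
  have hI := S.Icc_a_b_subset 0
  refine S.mul_Ψ_le_minOnIcc (S.memLp_top_f_comp 0 hu hv hu0 hv0 (div_pos hρ S.cc_pos) hub hvb)
    (S.ae_f_comp_nonneg 0 hu0 hv0) hμ (mul_nonneg (S.fInf_nonneg 0 hρ.le) hρ.le)
    (fun s hs => S.fInf_fst_mul_le hρ hs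
      ⟨hρu.trans (minOnIcc_le (hu.mono hI) hs), hub s (hI hs)⟩ ⟨hv0 s (hI hs), hvb s (hI hs)⟩)
    (S.h1_mul_le_H_add_L 0 0 (hβ 0) (hδ 0)) (S.h1_mul_le_H_add_L 0 1 (hβ 1) (hδ 1))
    (S.H_add_L_nonneg 0 0 (hβ 0) (hδ 0)) (S.H_add_L_nonneg 0 1 (hβ 1) (hδ 1)) heq

theorem fInf_mul_Ψ_le_minOnIcc_snd (hρv : ρ ≤ minOnIcc v (S.a 1) (S.b 1))
    (heq : ∀ t ∈ Icc (0:ℝ) 1, v t = S.T2 u v t + μ) :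
    S.fInf 1 ρ * ρ * S.Ψ 1 ≤ minOnIcc v (S.a 1) (S.b 1) := by
  have hβ (j : Fin 2) := S.β_nonneg 1 j hv0
  have hδ (j : Fin 2) := S.δ_nonneg 1 j hu0
  have hI := S.Icc_a_b_subset 1
  refine S.mul_Ψ_le_minOnIcc (S.memLp_top_f_comp 1 hu hv hu0 hv0 (div_pos hρ S.cc_pos) hub hvb)
    (S.ae_f_comp_nonneg 1 hu0 hv0) hμ (mul_nonneg (S.fInf_nonneg 1 hρ.le) hρ.le)
    (fun s hs => S.fInf_snd_mul_le hρ hs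
      ⟨hu0 s (hI hs), hub s (hI hs)⟩ ⟨hρv.trans (minOnIcc_le (hv.mono hI) hs), hvb s (hI hs)⟩)
    ((S.h1_mul_le_H_add_L 1 0 (hβ 0) (hδ 0)).trans_eq (add_comm _ _))
    ((S.h1_mul_le_H_add_L 1 1 (hβ 1) (hδ 1)).trans_eq (add_comm _ _))
    ((S.H_add_L_nonneg 1 0 (hβ 0) (hδ 0)).trans_eq (add_comm _ _))
    ((S.H_add_L_nonneg 1 1 (hβ 1) (hδ 1)).trans_eq (add_comm _ _)) heq

end Components

end Setup

/-- Under condition `(I⁰_ρ)`, for every `(u,v)` in the boundary of `V_ρ` relative to `K`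
(i.e. `(u,v) ∈ K` with `min_{[a₁,b₁]} u ≤ ρ`, `min_{[a₂,b₂]} v ≤ ρ` and at least one of
these minima equal to `ρ`) and every `μ ≥ 0`, one has `(u,v) ≠ T(u,v) + μ(e,e)` where
`e ≡ 1`. -/
theorem no_translate_fixed_point_on_boundary_Vrho (S : Setup) (ρ : ℝ) (hρ : 0 < ρ)
    (hI0 : S.CondI0 ρ) (u v : ℝ → ℝ) (huv : S.inK u v)
    (hu_le : minOnIcc u (S.a 0) (S.b 0) ≤ ρ) (hv_le : minOnIcc v (S.a 1) (S.b 1) ≤ ρ)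
    (hbd : minOnIcc u (S.a 0) (S.b 0) = ρ ∨ minOnIcc v (S.a 1) (S.b 1) = ρ)
    (μ : ℝ) (hμ : 0 ≤ μ) :
    ¬ ∀ t ∈ Icc (0:ℝ) 1, u t = S.T1 u v t + μ ∧ v t = S.T2 u v t + μ := by
  intro h
  obtain ⟨hu, hv, hu0, hv0, hKu, hKv⟩ := huv
  have hub t (ht : t ∈ Icc (0:ℝ) 1) := S.le_div_cc_of_minOnIcc_le 0 hρ.le hu hKu hu_le ht
  have hvb t (ht : t ∈ Icc (0:ℝ) 1) := S.le_div_cc_of_minOnIcc_le 1 hρ.le hv hKv hv_le ht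
  rcases hbd with hmin | hmin
  · have key := S.fInf_mul_Ψ_le_minOnIcc_fst hρ hμ hu hv hu0 hv0 hub hvb hmin.ge
      fun t ht => (h t ht).1
    rw [hmin] at key
    nlinarith [hI0 0]
  · have key := S.fInf_mul_Ψ_le_minOnIcc_snd hρ hμ hu hv hu0 hv0 hub hvb hmin.ge
      fun t ht => (h t ht).2
    rw [hmin] at key
    nlinarith [hI0 1]
end
end

section
/- Let k₂(t,s) = (1/6)s(1−t)(2t − s² − t²) for s ≤ t and k₂(t,s) = (1/6)t(1−s)(2s − t² − s²) for s > t, defined on [0,1]×[0,1], and let Φ₂(s) = (√3/27)s(1 − s²)^{3/2} for 0 ≤ s ≤ 1/2 and Φ₂(s) = (√3/27)(1−s)s^{3/2}(2−s)^{3/2} for 1/2 < s ≤ 1. Then 0 ≤ k₂(t,s) ≤ Φ₂(s) for all t, s ∈ [0,1]. -/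
open Set

/-- The Green's function of the beam problem `v'''' = h`, `v(0) = v''(0) = v(1) = v''(1) = 0`. -/
noncomputable def k2 : ℝ → ℝ → ℝ := fun t s =>
  if s ≤ t then (1/6) * (s * (1 - t) * (2*t - s^2 - t^2))
  else (1/6) * (t * (1 - s) * (2*s - t^2 - s^2))

/-- The upper bound function `Φ₂`. -/
noncomputable def Φ2 : ℝ → ℝ := fun s =>
  if s ≤ 1/2 then (Real.sqrt 3 / 27) * (s * (1 - s^2) ^ ((3:ℝ)/2))
  else (Real.sqrt 3 / 27) * ((1 - s) * s ^ ((3:ℝ)/2) * (2 - s) ^ ((3:ℝ)/2))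

lemma rpow32 {x : ℝ} (hx : 0 ≤ x) : x ^ ((3:ℝ)/2) = x * Real.sqrt x := by
  rw [show ((3:ℝ)/2) = 1 + 1/2 by norm_num, Real.rpow_add' hx (by norm_num),
    Real.rpow_one, Real.sqrt_eq_rpow]

lemma keyA (s t : ℝ) (hs0 : 0 ≤ s) (hst : s ≤ t) (ht1 : t ≤ 1) (hs2 : s ≤ 1/2) :
    (1/6) * (s * (1 - t) * (2*t - s^2 - t^2)) ≤
      (Real.sqrt 3 / 27) * (s * (1 - s^2) ^ ((3:ℝ)/2)) := by
  have hs1 : s ≤ 1 := by linarith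
  have hX : (0:ℝ) ≤ 1 - s^2 := by nlinarith
  rw [rpow32 hX]
  set r := Real.sqrt (1 - s^2) with hrdef
  have hr0 : 0 ≤ r := Real.sqrt_nonneg _
  have hr : r^2 = 1 - s^2 := Real.sq_sqrt hX
  set c := Real.sqrt 3 with hcdef
  have hc0 : 0 ≤ c := Real.sqrt_nonneg _
  have h3 : c^2 = 3 := Real.sq_sqrt (by norm_num)
  have hu : 0 ≤ 1 - t := by linarith
  have ha : (1-t)^2 ≤ 1 - s^2 := by nlinarith
  have hg0 : (0:ℝ) ≤ (1-t)*(2*t - s^2 - t^2) := mul_nonneg hu (by nlinarith)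
  have hsq : ((1-t)*(2*t - s^2 - t^2))^2 ≤ 4/27*(1-s^2)^3 := by
    nlinarith [mul_nonneg (sq_nonneg ((1-s^2) - 3*(1-t)^2))
      (show (0:ℝ) ≤ 4*(1-s^2) - 3*(1-t)^2 by nlinarith)]
  have hRHS0 : (0:ℝ) ≤ (2/9)*c*(1-s^2)*r := by positivity
  have hRHSsq : ((2/9)*c*(1-s^2)*r)^2 = 4/27*(1-s^2)^3 := by
    linear_combination ((4:ℝ)/81)*(1-s^2)^2*r^2*h3 + ((4:ℝ)/27)*(1-s^2)^2*hr
  have hg_le : (1-t)*(2*t - s^2 - t^2) ≤ (2/9)*c*(1-s^2)*r :=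
    (pow_le_pow_iff_left₀ hg0 hRHS0 two_ne_zero).mp (by rw [hRHSsq]; exact hsq)
  have hfin := mul_le_mul_of_nonneg_left hg_le hs0
  nlinarith [hfin]

lemma keyB (s t : ℝ) (hs2 : 1/2 ≤ s) (hst : s ≤ t) (ht1 : t ≤ 1) :
    (1/6) * (s * (1 - t) * (2*t - s^2 - t^2)) ≤
      (Real.sqrt 3 / 27) * ((1 - s) * s ^ ((3:ℝ)/2) * (2 - s) ^ ((3:ℝ)/2)) := by
  have hs0 : (0:ℝ) ≤ s := by linarith
  have hs1 : s ≤ 1 := by linarith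
  have h2s : (0:ℝ) ≤ 2 - s := by linarith
  rw [rpow32 hs0, rpow32 h2s]
  set p := Real.sqrt s with hpdef
  set q := Real.sqrt (2-s) with hqdef
  have hp0 : 0 ≤ p := Real.sqrt_nonneg _
  have hq0 : 0 ≤ q := Real.sqrt_nonneg _
  have hp : p^2 = s := Real.sq_sqrt hs0
  have hq : q^2 = 2 - s := Real.sq_sqrt h2s
  set c := Real.sqrt 3 with hcdef
  have hc0 : 0 ≤ c := Real.sqrt_nonneg _
  have h3 : c^2 = 3 := Real.sq_sqrt (by norm_num)
  -- step 1 : g(t) ≤ g(s)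
  have hgmono : (1-t)*(2*t - s^2 - t^2) ≤ 2*s*(1-s)^2 := by
    nlinarith [mul_nonneg (sub_nonneg.2 hst)
      (show (0:ℝ) ≤ (1-s^2) - ((1-t)^2 + (1-t)*(1-s) + (1-s)^2) by nlinarith),
      sq_nonneg (t - s)]
  -- step 2 : key scalar inequality
  have hL0 : (0:ℝ) ≤ 9*s*(1-s) := by nlinarith
  have hR0 : (0:ℝ) ≤ c*(2-s)*(p*q) := by positivity
  have hRsq : (c*(2-s)*(p*q))^2 = 3*s*(2-s)^3 := by
    linear_combination ((2-s)^2*p^2*q^2)*h3 + (3*(2-s)^2*q^2)*hp + (3*s*(2-s)^2)*hq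
  have hsqle : (9*s*(1-s))^2 ≤ (c*(2-s)*(p*q))^2 := by
    rw [hRsq]
    nlinarith [mul_nonneg hs0 (mul_nonneg (sq_nonneg (2*s-1)) (show (0:ℝ) ≤ 8-7*s by linarith))]
  have hkey : 9*s*(1-s) ≤ c*(2-s)*(p*q) :=
    (pow_le_pow_iff_left₀ hL0 hR0 two_ne_zero).mp hsqle
  have h1 : (0:ℝ) ≤ (1/27)*(s*(1-s)) := by nlinarith
  have hfin := mul_le_mul_of_nonneg_left hkey h1
  have hgm := mul_le_mul_of_nonneg_left hgmono hs0
  nlinarith [hfin, hgm]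

/-- Bounds for the Green's function `k₂`: `0 ≤ k₂(t,s) ≤ Φ₂(s)` on `[0,1]²`. -/
theorem k2_upper_bound :
    ∀ t ∈ Icc (0:ℝ) 1, ∀ s ∈ Icc (0:ℝ) 1, 0 ≤ k2 t s ∧ k2 t s ≤ Φ2 s := by
  rintro t ⟨ht0, ht1⟩ s ⟨hs0, hs1⟩
  unfold k2 Φ2
  split_ifs with h1 h2 h2
  · refine ⟨?_, keyA s t hs0 h1 ht1 h2⟩
    have h := mul_nonneg (mul_nonneg hs0 (show (0:ℝ) ≤ 1-t by linarith))
      (show (0:ℝ) ≤ 2*t - s^2 - t^2 by nlinarith)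
    linarith
  · refine ⟨?_, keyB s t (by linarith) h1 ht1⟩
    have h := mul_nonneg (mul_nonneg hs0 (show (0:ℝ) ≤ 1-t by linarith))
      (show (0:ℝ) ≤ 2*t - s^2 - t^2 by nlinarith)
    linarith
  · -- s > t, s ≤ 1/2 : use keyB at (1-s, 1-t)
    push_neg at h1
    constructor
    · have h := mul_nonneg (mul_nonneg ht0 (show (0:ℝ) ≤ 1-s by linarith))
        (show (0:ℝ) ≤ 2*s - t^2 - s^2 by nlinarith)
      linarith
    · have hb := keyB (1-s) (1-t) (by linarith) (by linarith) (by linarith)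
      have hmul : ((1-s)*(1+s)) ^ ((3:ℝ)/2) = (1-s) ^ ((3:ℝ)/2) * (1+s) ^ ((3:ℝ)/2) :=
        Real.mul_rpow (by linarith) (by linarith)
      calc (1/6) * (t * (1 - s) * (2*s - t^2 - s^2))
          = (1/6) * ((1-s) * (1 - (1-t)) * (2*(1-t) - (1-s)^2 - (1-t)^2)) := by ring
        _ ≤ (Real.sqrt 3 / 27) * ((1 - (1-s)) * (1-s) ^ ((3:ℝ)/2) * (2 - (1-s)) ^ ((3:ℝ)/2)) := hb
        _ = (Real.sqrt 3 / 27) * (s * (1 - s^2) ^ ((3:ℝ)/2)) := by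
            rw [show (1:ℝ) - s^2 = (1-s)*(1+s) by ring, hmul,
              show (2:ℝ) - (1-s) = 1 + s by ring, show (1:ℝ) - (1-s) = s by ring]
            ring
  · -- s > t, s > 1/2 : use keyA at (1-s, 1-t)
    push_neg at h1 h2
    constructor
    · have h := mul_nonneg (mul_nonneg ht0 (show (0:ℝ) ≤ 1-s by linarith))
        (show (0:ℝ) ≤ 2*s - t^2 - s^2 by nlinarith)
      linarith
    · have ha := keyA (1-s) (1-t) (by linarith) (by linarith) (by linarith) (by linarith)
      have hmul : (s*(2-s)) ^ ((3:ℝ)/2) = s ^ ((3:ℝ)/2) * (2-s) ^ ((3:ℝ)/2) :=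
        Real.mul_rpow (by linarith) (by linarith)
      calc (1/6) * (t * (1 - s) * (2*s - t^2 - s^2))
          = (1/6) * ((1-s) * (1 - (1-t)) * (2*(1-t) - (1-s)^2 - (1-t)^2)) := by ring
        _ ≤ (Real.sqrt 3 / 27) * ((1-s) * (1 - (1-s)^2) ^ ((3:ℝ)/2)) := ha
        _ = (Real.sqrt 3 / 27) * ((1 - s) * s ^ ((3:ℝ)/2) * (2 - s) ^ ((3:ℝ)/2)) := by
            rw [show (1:ℝ) - (1-s)^2 = s*(2-s) by ring, hmul]
            ring
end
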